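/- Let A be an n×n rational matrix, X₀ ∈ ℚⁿ, and C = [1, 0, ..., 0] (row vector of length n). Define φ₁(A) as the 2n×2n non-negative matrix replacing each entry A_{ij} by the block [[max(A_{ij},0), max(-A_{ij},0)],[max(-A_{ij},0), max(A_{ij},0)]], and φ₂(X₀) ∈ ℚ²ⁿ the vector replacing each entry X₀(i) by the pair (X₀(i), 0). Let C'' = [1, -1, 0, ..., 0] of length 2n. Then C'' · exp(φ₁(A)·t) · φ₂(X₀) = C · exp(A·t) · X₀ for all real t. -/

import Mathlib

open Matrix NormedSpace

/-- The doubling map `φ₁` on rational matrices. -/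
def phi1 {n : ℕ} (A : Matrix (Fin n) (Fin n) ℚ) :
    Matrix (Fin n × Fin 2) (Fin n × Fin 2) ℚ :=
  fun p q => if p.2 = q.2 then max (A p.1 q.1) 0 else max (-(A p.1 q.1)) 0

/-- The doubling map `φ₂` on vectors: `X i` becomes the pair `(X i, 0)`. -/
def phi2 {n : ℕ} (X : Fin n → ℚ) : Fin n × Fin 2 → ℚ :=
  fun p => if p.2 = 0 then X p.1 else 0

/-!
The matrix `P : v ↦ (i ↦ v (i,0) - v (i,1))` intertwines the two systems: `P φ₁(A) = A P`,
since `max a 0 - max (-a) 0 = a`. Intertwining passes through the exponential series, so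
`P exp(φ₁(A) t) = exp(A t) P`, and the claim follows from `P φ₂(X₀) = X₀` and `C'' = C P`.
-/

open scoped Matrix.Norms.Operator in
theorem Matrix.mul_exp_eq_exp_mul {𝕂 m m' : Type*} [RCLike 𝕂] [Fintype m] [DecidableEq m]
    [Fintype m'] [DecidableEq m'] {P : Matrix m m' 𝕂} {X : Matrix m' m' 𝕂} {Y : Matrix m m 𝕂}
    (h : P * X = Y * P) : P * exp X = exp Y * P := by
  have hpow : ∀ k : ℕ, P * X ^ k = Y ^ k * P := by
    intro k
    induction k with
    | zero => simp
    | succ k ih => rw [pow_succ, ← Matrix.mul_assoc, ih, Matrix.mul_assoc, h, ← Matrix.mul_assoc,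
        pow_succ]
  have hX := (exp_series_hasSum_exp' (𝕂 := 𝕂) X).map (mulLeftLinearMap m' 𝕂 P)
    (continuous_const.matrix_mul continuous_id)
  have hY := (exp_series_hasSum_exp' (𝕂 := 𝕂) Y).map (mulRightLinearMap m 𝕂 P)
    (continuous_id.matrix_mul continuous_const)
  refine hX.unique ?_
  convert hY using 1
  · funext k
    simp [hpow]
  · rfl

def diffMatrix (ι R : Type*) [DecidableEq ι] [Ring R] : Matrix ι (ι × Fin 2) R :=
  Matrix.of fun i q => if q.1 = i then (if q.2 = 0 then 1 else -1) else 0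

section DiffMatrix

variable {ι R : Type*} [Fintype ι] [DecidableEq ι] [Ring R]

theorem diffMatrix_mul_apply {κ : Type*} (M : Matrix (ι × Fin 2) κ R) (i : ι) (k : κ) :
    (diffMatrix ι R * M) i k = M (i, 0) k - M (i, 1) k := by
  simp [diffMatrix, mul_apply, Fintype.sum_prod_type, Fin.sum_univ_two, sub_eq_add_neg]

theorem mul_diffMatrix_apply {κ : Type*} (M : Matrix κ ι R) (k : κ) (j : ι)
    (s : Fin 2) : (M * diffMatrix ι R) k (j, s) = if s = 0 then M k j else -M k j := by
  simp [diffMatrix, mul_apply]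

theorem diffMatrix_mulVec (v : ι × Fin 2 → R) (i : ι) :
    (diffMatrix ι R *ᵥ v) i = v (i, 0) - v (i, 1) := by
  simp [diffMatrix, mulVec, dotProduct, Fintype.sum_prod_type, Fin.sum_univ_two, sub_eq_add_neg]

end DiffMatrix

theorem diffMatrix_mul_phi1 {n : ℕ} (A : Matrix (Fin n) (Fin n) ℚ) :
    diffMatrix (Fin n) ℝ * (phi1 A).map ((↑) : ℚ → ℝ) =
      A.map ((↑) : ℚ → ℝ) * diffMatrix (Fin n) ℝ := by
  ext i ⟨j, s⟩ : 2
  rw [mul_diffMatrix_apply, diffMatrix_mul_apply]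
  fin_cases s
  · simp [phi1]
  · simpa [phi1] using max_zero_sub_max_neg_zero_eq_self (-(A i j : ℝ))

theorem diffMatrix_mulVec_phi2 {n : ℕ} (X : Fin n → ℚ) :
    diffMatrix (Fin n) ℝ *ᵥ (fun p => (phi2 X p : ℝ)) = fun i => (X i : ℝ) := by
  ext i
  simp [diffMatrix_mulVec, phi2]

theorem dotProduct_exp_smul_mulVec_of_mul_eq_mul {𝕂 m m' : Type*} [RCLike 𝕂] [Fintype m]
    [DecidableEq m] [Fintype m'] [DecidableEq m'] {P : Matrix m m' 𝕂} {X : Matrix m' m' 𝕂}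
    {Y : Matrix m m 𝕂} (h : P * X = Y * P) (c : m → 𝕂) (v : m' → 𝕂) (t : 𝕂) :
    (c ᵥ* P) ⬝ᵥ (exp (t • X) *ᵥ v) = c ⬝ᵥ (exp (t • Y) *ᵥ (P *ᵥ v)) := by
  have ht : P * (t • X) = (t • Y) * P := by rw [Matrix.mul_smul, Matrix.smul_mul, h]
  rw [← dotProduct_mulVec, mulVec_mulVec, mul_exp_eq_exp_mul ht, ← mulVec_mulVec]

/-- `C'' · exp(φ₁(A) t) · φ₂(X₀) = C · exp(A t) · X₀` where `C = [1,0,…,0]` and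
`C'' = [1,-1,0,…,0]`. -/
theorem doubling_preserves_output
    {n : ℕ} [NeZero n] (A : Matrix (Fin n) (Fin n) ℚ) (X0 : Fin n → ℚ)
    (C : Fin n → ℝ) (hC : C = fun j => if j = 0 then 1 else 0)
    (C'' : Fin n × Fin 2 → ℝ)
    (hC'' : C'' = fun p => if p.1 = 0 then (if p.2 = 0 then 1 else -1) else 0) :
    ∀ t : ℝ,
      C'' ⬝ᵥ (NormedSpace.exp (t • (phi1 A).map ((↑) : ℚ → ℝ)) *ᵥ
          fun p => ((phi2 X0 p : ℚ) : ℝ)) =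
      C ⬝ᵥ (NormedSpace.exp (t • A.map ((↑) : ℚ → ℝ)) *ᵥ fun i => ((X0 i : ℚ) : ℝ)) := by
  intro t
  have hC''C : C'' = C ᵥ* diffMatrix (Fin n) ℝ := by
    ext ⟨j, s⟩
    subst hC hC''
    by_cases hj : j = 0 <;> fin_cases s <;> simp [hj, vecMul, dotProduct, diffMatrix]
  rw [hC''C, dotProduct_exp_smul_mulVec_of_mul_eq_mul (diffMatrix_mul_phi1 A),
    diffMatrix_mulVec_phi2]
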